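/- Let F_n be the free group of rank n with lower central series Γ_*, and 𝔈_r(n) = {f ∈ End(F_n) : f(x)x⁻¹ ∈ Γ_{r+1} for all x}. Define σ(f) by σ(f)(x_i) = x_i f(x_i)⁻¹ x_i. If f ∈ 𝔈_r(n) with r ≥ 1, then σ(f) ∈ 𝔈_r(n) and both compositions f∘σ(f) and σ(f)∘f lie in 𝔈_{2r}(n). -/

import Mathlib

/-- `Gam G k` is the `k`-th term `Γ_k` of the lower central series of `G`
(with the convention `Γ_1 = G`). -/
abbrev Gam (G : Type*) [Group G] (k : ℕ) : Subgroup G := (⊤ : Subgroup G).lowerCentralSeries (k - 1)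

/-- The map `σ` on endomorphisms of the free group, determined on generators by
`σ(f)(x_i) = x_i · f(x_i)⁻¹ · x_i`. -/
def sigmaEnd (n : ℕ) (f : FreeGroup (Fin n) →* FreeGroup (Fin n)) :
    FreeGroup (Fin n) →* FreeGroup (Fin n) :=
  FreeGroup.lift fun i => FreeGroup.of i * (f (FreeGroup.of i))⁻¹ * FreeGroup.of i

/-!
Write `d_f(x) = f(x) x⁻¹`. An endomorphism with `d_f(G) ⊆ Γ_{r+1}` also satisfies
`d_f(Γ_{s+1}) ⊆ Γ_{r+s+1}`: inductively, on a commutator `[a, y]` with `a ∈ Γ_{s+1}` the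
perturbations `d_f(a)` and `d_f(y)` only change `[a, y]` by commutators of total weight
`r + s + 1`, and `[Γ_i, Γ_j] ⊆ Γ_{i+j}` by the three subgroups lemma.
On a generator, `d_{σ(f)}(x_i) = d_f(x_i)⁻¹`, so for `g ∘ h` with `{g, h} = {f, σ(f)}` one gets
`d_{g ∘ h}(x_i) = g(c) c⁻¹` with `c = d_h(x_i) ∈ Γ_{r+1}`, which lies in `Γ_{2r+1}`.
Mathlib indexes from zero: `(⊤ : Subgroup G).lowerCentralSeries k` is `Γ_{k+1}`.
-/

open Subgroup QuotientGroup
open scoped commutatorElement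

section LowerCentralSeries

variable {G : Type*} [Group G]

theorem commutator_commutator_le_of_rotate {H₁ H₂ H₃ N : Subgroup G} [N.Normal]
    (h1 : ⁅⁅H₂, H₃⁆, H₁⁆ ≤ N) (h2 : ⁅⁅H₃, H₁⁆, H₂⁆ ≤ N) : ⁅⁅H₁, H₂⁆, H₃⁆ ≤ N := by
  have le_iff : ∀ {A B C : Subgroup G}, ⁅⁅A, B⁆, C⁆ ≤ N ↔
      ⁅⁅A.map (mk' N), B.map (mk' N)⁆, C.map (mk' N)⁆ = ⊥ := by
    intro A B C
    rw [← map_commutator, ← map_commutator, Subgroup.map_eq_bot_iff, ker_mk']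
  exact le_iff.2 (commutator_commutator_eq_bot_of_rotate (le_iff.1 h1) (le_iff.1 h2))

theorem commutator_lowerCentralSeries_le (i j : ℕ) :
    ⁅(⊤ : Subgroup G).lowerCentralSeries i, (⊤ : Subgroup G).lowerCentralSeries j⁆ ≤
      (⊤ : Subgroup G).lowerCentralSeries (i + j + 1) := by
  induction j generalizing i with
  | zero => rfl
  | succ j ih =>
    rw [Subgroup.lowerCentralSeries_succ, commutator_comm]
    refine commutator_commutator_le_of_rotate ?_ ?_
    · rw [commutator_comm ⊤, ← Subgroup.lowerCentralSeries_succ]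
      exact (ih (i + 1)).trans (Subgroup.lowerCentralSeries_antitone _ (by omega))
    · refine (commutator_mono (ih i) le_rfl).trans ?_
      rw [← Subgroup.lowerCentralSeries_succ]
      exact Subgroup.lowerCentralSeries_antitone _ (by omega)

theorem commutatorElement_mul_mul_inv_mem {N : Subgroup G} [hN : N.Normal] {a y u v : G}
    (hav : ⁅a, v⁆ ∈ N) (huv : ⁅u * v, ⁅a, y⁆⁆ ∈ N) (hu : ⁅u, v * y⁆ ∈ N) :
    ⁅u * a, v * y⁆ * ⁅a, y⁆⁻¹ ∈ N := by
  have expand : ⁅u * a, v * y⁆ * ⁅a, y⁆⁻¹ =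
      (u * ⁅a, v⁆ * u⁻¹) * ⁅u * v, ⁅a, y⁆⁆ * (⁅a, y⁆ * ⁅u, v * y⁆ * ⁅a, y⁆⁻¹) := by
    simp only [commutatorElement_def]
    group
  rw [expand]
  exact N.mul_mem (N.mul_mem (hN.conj_mem _ hav u) huv) (hN.conj_mem _ hu _)

theorem mul_inv_mem_lowerCentralSeries_add {f : G →* G} {r : ℕ}
    (hf : ∀ x, f x * x⁻¹ ∈ (⊤ : Subgroup G).lowerCentralSeries r) {s : ℕ} {c : G}
    (hc : c ∈ (⊤ : Subgroup G).lowerCentralSeries s) :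
    f c * c⁻¹ ∈ (⊤ : Subgroup G).lowerCentralSeries (r + s) := by
  induction s generalizing c with
  | zero => exact hf c
  | succ s ih =>
    set N := (⊤ : Subgroup G).lowerCentralSeries (r + s + 1)
    suffices h : (⊤ : Subgroup G).lowerCentralSeries (s + 1) ≤
        ((mk' N).comp f).eqLocus (mk' N) by
      rw [← div_eq_mul_inv]
      exact eq_iff_div_mem.1 (h hc)
    rw [Subgroup.lowerCentralSeries_succ, commutator_le]
    intro a ha y _
    change (f ⁅a, y⁆ : G ⧸ N) = ⁅a, y⁆
    rw [eq_iff_div_mem, div_eq_mul_inv, map_commutatorElement]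
    have hu := ih ha
    have hv := hf y
    have hay : ⁅a, y⁆ ∈ (⊤ : Subgroup G).lowerCentralSeries (s + 1) :=
      commutator_mem_commutator ha (mem_top y)
    have key := commutatorElement_mul_mul_inv_mem (N := N) (a := a) (y := y)
      (u := f a * a⁻¹) (v := f y * y⁻¹) ?_ ?_ ?_
    · simpa only [inv_mul_cancel_right] using key
    · exact (commutator_lowerCentralSeries_le s r).trans
        (Subgroup.lowerCentralSeries_antitone _ (by omega)) (commutator_mem_commutator ha hv)
    · refine (commutator_lowerCentralSeries_le r (s + 1)).trans
        (Subgroup.lowerCentralSeries_antitone _ (by omega)) (commutator_mem_commutator ?_ hay)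
      exact mul_mem (Subgroup.lowerCentralSeries_antitone _ (Nat.le_add_right r s) hu) hv
    · exact commutator_mem_commutator hu (mem_top _)

theorem comp_apply_mul_inv_of_mul_inv_eq {g h : G →* G} {x : G}
    (hx : g x * x⁻¹ = (h x * x⁻¹)⁻¹) :
    g (h x) * x⁻¹ = g (h x * x⁻¹) * (h x * x⁻¹)⁻¹ := by
  rw [← hx, map_mul, map_inv]
  group

end LowerCentralSeries

namespace FreeGroup

variable {α : Type*}

theorem mul_inv_mem_of_forall_of {N : Subgroup (FreeGroup α)} [N.Normal]
    {f : FreeGroup α →* FreeGroup α} (h : ∀ i, f (of i) * (of i)⁻¹ ∈ N) (x : FreeGroup α) :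
    f x * x⁻¹ ∈ N := by
  have hf : (mk' N).comp f = mk' N :=
    ext_hom _ _ fun i => eq_iff_div_mem.2 (by rw [div_eq_mul_inv]; exact h i)
  rw [← div_eq_mul_inv]
  exact eq_iff_div_mem.1 (DFunLike.congr_fun hf x)

theorem comp_mul_inv_mem_lowerCentralSeries_add {g h : FreeGroup α →* FreeGroup α} {r : ℕ}
    (hg : ∀ x, g x * x⁻¹ ∈ (⊤ : Subgroup (FreeGroup α)).lowerCentralSeries r)
    (hh : ∀ x, h x * x⁻¹ ∈ (⊤ : Subgroup (FreeGroup α)).lowerCentralSeries r)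
    (hgh : ∀ i, g (of i) * (of i)⁻¹ = (h (of i) * (of i)⁻¹)⁻¹) (x : FreeGroup α) :
    g.comp h x * x⁻¹ ∈ (⊤ : Subgroup (FreeGroup α)).lowerCentralSeries (r + r) :=
  mul_inv_mem_of_forall_of (fun i => (comp_apply_mul_inv_of_mul_inv_eq (hgh i)).symm ▸
    mul_inv_mem_lowerCentralSeries_add hg (hh (of i))) x

end FreeGroup

theorem sigmaEnd_of_mul_inv {n : ℕ} (f : FreeGroup (Fin n) →* FreeGroup (Fin n)) (i : Fin n) :
    sigmaEnd n f (FreeGroup.of i) * (FreeGroup.of i)⁻¹ =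
      (f (FreeGroup.of i) * (FreeGroup.of i)⁻¹)⁻¹ := by
  simp only [sigmaEnd, FreeGroup.lift_apply_of]
  group

theorem stmt4_general (n r : ℕ)
    (f : FreeGroup (Fin n) →* FreeGroup (Fin n))
    (hf : ∀ x : FreeGroup (Fin n), f x * x⁻¹ ∈ Gam (FreeGroup (Fin n)) (r + 1)) :
    (∀ x : FreeGroup (Fin n),
        sigmaEnd n f x * x⁻¹ ∈ Gam (FreeGroup (Fin n)) (r + 1)) ∧
    (∀ x : FreeGroup (Fin n),
        (f.comp (sigmaEnd n f)) x * x⁻¹ ∈ Gam (FreeGroup (Fin n)) (2 * r + 1)) ∧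
    (∀ x : FreeGroup (Fin n),
        ((sigmaEnd n f).comp f) x * x⁻¹ ∈ Gam (FreeGroup (Fin n)) (2 * r + 1)) := by
  have hσ : ∀ x, sigmaEnd n f x * x⁻¹ ∈ Gam (FreeGroup (Fin n)) (r + 1) :=
    FreeGroup.mul_inv_mem_of_forall_of fun i => sigmaEnd_of_mul_inv f i ▸ inv_mem (hf _)
  have gam_two_mul : Gam (FreeGroup (Fin n)) (2 * r + 1) =
      (⊤ : Subgroup (FreeGroup (Fin n))).lowerCentralSeries (r + r) := by
    rw [two_mul]
    rfl
  rw [gam_two_mul]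
  refine ⟨hσ, FreeGroup.comp_mul_inv_mem_lowerCentralSeries_add hf hσ fun i => ?_,
    FreeGroup.comp_mul_inv_mem_lowerCentralSeries_add hσ hf (sigmaEnd_of_mul_inv f)⟩
  rw [sigmaEnd_of_mul_inv, inv_inv]

/-- If `f ∈ 𝔈_r(n)` with `r ≥ 1`, then `σ(f) ∈ 𝔈_r(n)` and both
`f ∘ σ(f)` and `σ(f) ∘ f` lie in `𝔈_{2r}(n)`. -/
theorem stmt4 (n r : ℕ) (hr : 1 ≤ r)
    (f : FreeGroup (Fin n) →* FreeGroup (Fin n))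
    (hf : ∀ x : FreeGroup (Fin n), f x * x⁻¹ ∈ Gam (FreeGroup (Fin n)) (r + 1)) :
    (∀ x : FreeGroup (Fin n),
        sigmaEnd n f x * x⁻¹ ∈ Gam (FreeGroup (Fin n)) (r + 1)) ∧
    (∀ x : FreeGroup (Fin n),
        (f.comp (sigmaEnd n f)) x * x⁻¹ ∈ Gam (FreeGroup (Fin n)) (2 * r + 1)) ∧
    (∀ x : FreeGroup (Fin n),
        ((sigmaEnd n f).comp f) x * x⁻¹ ∈ Gam (FreeGroup (Fin n)) (2 * r + 1)) :=
  stmt4_general n r f hf
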